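/- arXiv:1105.2215 — 3 statements merged into one kernel-verified Lean document; each statement's English description precedes it below -/
import Mathlib

section
/- Define elements g^n_{r,i} of the path algebra KQ of the quiver with m vertices and arrows a_i : i → i+1, ā_i : i+1 → i, by g^0_{0,i} = e_i and g^n_{r,i} = g^{n-1}_{r,i} a_{i+n-2r-1} + (-1)^n q_{i-r+1}⋯q_{i+n-2r} g^{n-1}_{r-1,i} ā_{i+n-2r} (with g^{n-1}_{-1,i} = g^{n-1}_{n,i} = 0 and empty products equal to 1). Then for all n ≥ 1, 0 ≤ r ≤ n, and all i, the alternative recursion holds: g^n_{r,i} = (-1)^r q_{i-r+1}⋯q_i · a_i g^{n-1}_{r,i+1} + (-1)^r ā_{i-1} g^{n-1}_{r-1,i-1}. -/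
set_option maxHeartbeats 1600000


/-- The elements `g^n_{r,i}` of the path algebra of the cyclic quiver, defined by the
recursion `g^0_{0,i} = e_i` and
`g^n_{r,i} = g^{n-1}_{r,i} a_{i+n-2r-1} + (-1)^n q_{i-r+1} ⋯ q_{i+n-2r} g^{n-1}_{r-1,i} ā_{i+n-2r}`,
with `g^{n-1}_{r,i} = 0` for `r < 0` or `r > n-1`, and empty products equal to `1`.
We work in an arbitrary associative `K`-algebra `A` containing elements
`e i`, `a i`, `ā i` (`i ∈ ℤ/m`). -/
noncomputable def g {K : Type*} [Field K] {m : ℕ} {A : Type*} [Ring A] [Algebra K A]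
    (q : ZMod m → K) (e a abar : ZMod m → A) : ℕ → ℤ → ZMod m → A
  | 0, r, i => if r = 0 then e i else 0
  | (n + 1), r, i =>
      g q e a abar n r i * a (i + (n : ZMod m) - 2 * (r : ZMod m))
      + ((-1 : K) ^ (n + 1) *
          ∏ k ∈ Finset.range ((n + 1 : ℤ) - r).toNat,
            q (i - (r : ZMod m) + 1 + (k : ZMod m))) •
        (g q e a abar n (r - 1) i * abar (i + (n : ZMod m) + 1 - 2 * (r : ZMod m)))

section aux
variable {K : Type*} [Field K] {m : ℕ} {A : Type*} [Ring A] [Algebra K A]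
  (q : ZMod m → K) (e a abar : ZMod m → A)

lemma g_succ (n : ℕ) (r : ℤ) (i : ZMod m) :
    g q e a abar (n+1) r i =
      g q e a abar n r i * a (i + (n : ZMod m) - 2 * (r : ZMod m))
      + ((-1 : K) ^ (n + 1) *
          ∏ k ∈ Finset.range ((n + 1 : ℤ) - r).toNat,
            q (i - (r : ZMod m) + 1 + (k : ZMod m))) •
        (g q e a abar n (r - 1) i * abar (i + (n : ZMod m) + 1 - 2 * (r : ZMod m))) := rfl

lemma g_out (n : ℕ) (r : ℤ) (h : r < 0 ∨ (n:ℤ) < r) (i : ZMod m) :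
    g q e a abar n r i = 0 := by
  induction n generalizing r i with
  | zero =>
      have : r ≠ 0 := by omega
      simp [g, this]
  | succ n ih =>
      rw [g_succ, ih r (by push_cast at h ⊢; omega) i, ih (r-1) (by push_cast at h ⊢; omega) i]
      simp

lemma prod_shift (j : ZMod m) (s : ℕ) :
    ∏ k ∈ Finset.range (s+1), q (j + 1 + (k : ZMod m))
      = q (j + 1) * ∏ k ∈ Finset.range s, q (j + 1 + 1 + (k : ZMod m)) := by
  rw [Finset.prod_range_succ']
  rw [mul_comm]
  congr 1
  · push_cast; ring_nf
  · apply Finset.prod_congr rfl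
    intro k _
    congr 1
    push_cast
    ring

lemma key
    (hee : ∀ i, e i * e i = e i)
    (hea : ∀ i, e i * a i = a i) (hae : ∀ i, a i * e (i + 1) = a i)
    (heb : ∀ i, e (i + 1) * abar i = abar i) (hbe : ∀ i, abar i * e i = abar i) :
    ∀ n : ℕ, ∀ r : ℤ, 0 ≤ r → r ≤ (n:ℤ) + 1 → ∀ i : ZMod m,
    g q e a abar (n+1) r i
      = ((-1 : K) ^ r.toNat *
            ∏ k ∈ Finset.range r.toNat, q (i - (r : ZMod m) + 1 + (k : ZMod m))) •
          (a i * g q e a abar n r (i + 1))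
        + ((-1 : K) ^ r.toNat) •
          (abar (i - 1) * g q e a abar n (r - 1) (i - 1)) := by
  intro n
  induction n with
  | zero =>
      intro r hr0 hr1 i
      interval_cases r
      · rw [g_succ, g_out q e a abar 0 (0-1 : ℤ) (by omega) i]
        have h1 : g q e a abar 0 (0:ℤ) i = e i := by simp [g]
        have h2 : g q e a abar 0 (0:ℤ) (i+1) = e (i+1) := by simp [g]
        have h3 : g q e a abar 0 ((0:ℤ)-1) (i-1) = 0 := g_out q e a abar 0 _ (by omega) _
        rw [h1, h2, h3]
        simp [hea, hae]
      · rw [g_succ, g_out q e a abar 0 (1:ℤ) (by omega) i]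
        have h1 : g q e a abar 0 ((1:ℤ)-1) i = e i := by norm_num [g]
        have h2 : g q e a abar 0 (1:ℤ) (i+1) = 0 := g_out q e a abar 0 _ (by omega) _
        have h3 : g q e a abar 0 ((1:ℤ)-1) (i-1) = e (i-1) := by norm_num [g]
        rw [h1, h2, h3]
        have hb : e (i - 1 + 1) * abar (i-1) = abar (i-1) := heb (i-1)
        rw [sub_add_cancel] at hb
        have harg : i + (0:ℕ) + 1 - 2 * ((1:ℤ) : ZMod m) = i - 1 := by push_cast; ring
        rw [harg, hb, hbe]
        simp
  | succ n ih =>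
      intro r hr0 hr2 i
      push_cast at hr2
      rcases lt_or_ge r 1 with h1 | hr1
      · -- r = 0
        have hr : r = 0 := by omega
        subst hr
        rw [g_succ q e a abar (n+1) 0 i,
            ih 0 le_rfl (by omega) i,
            g_out q e a abar (n+1) ((0:ℤ)-1) (by omega) i,
            g_succ q e a abar n 0 (i+1),
            g_out q e a abar (n+1) ((0:ℤ)-1) (by omega) (i-1),
            g_out q e a abar n ((0:ℤ)-1) (by omega) (i-1),
            g_out q e a abar n ((0:ℤ)-1) (by omega) (i+1)]
        push_cast
        simp only [Int.toNat_zero, pow_zero, Finset.range_zero, Finset.prod_empty, mul_one,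
          one_mul, one_smul, mul_zero, zero_mul, smul_zero, add_zero, zero_add,
          Int.cast_zero, sub_zero]
        rw [show (i + 1 + (n:ZMod m) : ZMod m) = i + ((n:ZMod m)+1) by ring]
        rw [mul_assoc]
      · rcases lt_or_ge ((n:ℤ)+1) r with h2 | h2
        · -- r = n+2
          have hr : r = (n:ℤ)+2 := by omega
          subst hr
          rw [g_succ q e a abar (n+1) ((n:ℤ)+2) i,
              g_out q e a abar (n+1) ((n:ℤ)+2) (by push_cast; omega) i,
              ih ((n:ℤ)+2-1) (by omega) (by omega) i,
              g_out q e a abar n ((n:ℤ)+2-1) (by omega) (i+1),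
              g_out q e a abar (n+1) ((n:ℤ)+2) (by push_cast; omega) (i+1),
              g_succ q e a abar n ((n:ℤ)+2-1) (i-1),
              g_out q e a abar n ((n:ℤ)+2-1) (by omega) (i-1)]
          rw [show ((n:ℤ)+2).toNat = n + 2 by omega,
              show ((n:ℤ)+2-1).toNat = n + 1 by omega,
              show ((((n+1):ℕ):ℤ) + 1 - ((n:ℤ)+2)).toNat = 0 by push_cast; omega,
              show ((n:ℤ) + 1 - ((n:ℤ)+2-1)).toNat = 0 by omega]
          push_cast
          simp only [Finset.range_zero, Finset.prod_empty, mul_one, one_mul,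
            mul_zero, zero_mul, smul_zero, add_zero, zero_add]
          rw [show (i - 1 + (n:ZMod m) + 1 - 2*((n:ZMod m)+2-1) : ZMod m)
                = i + ((n:ZMod m)+1) + 1 - 2*((n:ZMod m)+2) by ring]
          simp only [smul_mul_assoc, mul_smul_comm, smul_smul, mul_assoc]
          -- closed already
        · -- 1 ≤ r ≤ n+1
          obtain ⟨t, ht⟩ : ∃ t:ℕ, r.toNat = t + 1 := ⟨(r-1).toNat, by omega⟩
          set u : ℕ := ((n:ℤ) + 1 - r).toNat with hu
          rw [g_succ q e a abar (n+1) r i,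
              ih r (by omega) (by omega) i, ih (r-1) (by omega) (by omega) i,
              g_succ q e a abar n r (i+1), g_succ q e a abar n (r-1) (i-1)]
          rw [ht, show (r-1).toNat = t by omega,
              show ((((n+1):ℕ):ℤ) + 1 - r).toNat = u + 1 by push_cast; omega,
              show ((n:ℤ) + 1 - (r-1)).toNat = u + 1 by omega]
          rw [← hu]
          push_cast
          have pcong : ∀ (j j' : ZMod m), j = j' → ∀ s : ℕ,
              (∏ k ∈ Finset.range s, q (j + 1 + (k : ZMod m)))
                = ∏ k ∈ Finset.range s, q (j' + 1 + (k : ZMod m)) := by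
            rintro j _ rfl s; rfl
          rw [pcong (i - ((r:ZMod m) - 1)) (i - (r:ZMod m) + 1) (by ring) t,
              pcong (i + 1 - (r:ZMod m)) (i - (r:ZMod m) + 1) (by ring) u,
              pcong (i - 1 - ((r:ZMod m) - 1)) (i - (r:ZMod m)) (by ring) (u+1),
              prod_shift q (i - (r:ZMod m)) u, prod_shift q (i - (r:ZMod m)) t]
          rw [show (i + 1 + (n:ZMod m) - 2*((r:ZMod m))) = i + ((n:ZMod m)+1) - 2*(r:ZMod m) by ring,
              show (i - 1 + (n:ZMod m) - 2*((r:ZMod m)-1)) = i + ((n:ZMod m)+1) - 2*(r:ZMod m) by ring,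
              show (i + 1 + (n:ZMod m) + 1 - 2*((r:ZMod m))) = i + ((n:ZMod m)+1) + 1 - 2*(r:ZMod m) by ring,
              show (i - 1 + (n:ZMod m) + 1 - 2*((r:ZMod m)-1)) = i + ((n:ZMod m)+1) + 1 - 2*(r:ZMod m) by ring]
          simp only [add_mul, mul_add, smul_mul_assoc, mul_smul_comm, smul_smul, mul_assoc, smul_add]
          match_scalars <;> ring
end aux

/-- The alternative recursion for the `g^n_{r,i}`:
`g^n_{r,i} = (-1)^r q_{i-r+1} ⋯ q_i · a_i g^{n-1}_{r,i+1} + (-1)^r ā_{i-1} g^{n-1}_{r-1,i-1}`,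
valid for all `n ≥ 1` and `0 ≤ r ≤ n` (in the path algebra: we assume only the
path-composability relations between the trivial paths `e_i` and the arrows). -/
theorem stmt9 {K : Type*} [Field K] {m : ℕ} {A : Type*} [Ring A] [Algebra K A]
    (q : ZMod m → K) (hq : ∀ i, q i ≠ 0) (e a abar : ZMod m → A)
    (hee : ∀ i, e i * e i = e i)
    (hea : ∀ i, e i * a i = a i) (hae : ∀ i, a i * e (i + 1) = a i)
    (heb : ∀ i, e (i + 1) * abar i = abar i) (hbe : ∀ i, abar i * e i = abar i)
    (n : ℕ) (hn : 1 ≤ n) (r : ℤ) (hr0 : 0 ≤ r) (hrn : r ≤ (n : ℤ)) (i : ZMod m) :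
    g q e a abar n r i
      = ((-1 : K) ^ r.toNat *
            ∏ k ∈ Finset.range r.toNat, q (i - (r : ZMod m) + 1 + (k : ZMod m))) •
          (a i * g q e a abar (n - 1) r (i + 1))
        + ((-1 : K) ^ r.toNat) •
          (abar (i - 1) * g q e a abar (n - 1) (r - 1) (i - 1)) := by
  obtain ⟨n', rfl⟩ : ∃ n', n = n' + 1 := ⟨n - 1, by omega⟩
  exact key q e a abar hee hea hae heb hbe n' r hr0 (by push_cast at hrn ⊢; omega) i
end

section
/- Let K be a field, m ≥ 2, q_0,…,q_{m-1} ∈ K^*, and Λ_q = KQ/I_q the algebra on the cyclic quiver with relations a_i a_{i+1} = 0, ā_{i-1} ā_{i-2} = 0, q_i a_i ā_i = ā_{i-1} a_{i-1}. Then the center Z(Λ_q) has K-basis {1, x_0, x_1, …, x_{m-1}}, where x_i = a_i ā_i, and Z(Λ_q) ≅ K[x_0,…,x_{m-1}]/(x_i x_j); in particular dim_K Z(Λ_q) = m + 1. -/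
/-- Generators of the path algebra of the cyclic quiver with `m` vertices:
trivial paths `e i`, arrows `a i : i → i+1` and `abar i : i+1 → i`. -/
inductive Gen (m : ℕ) : Type
  | e (i : ZMod m) : Gen m
  | a (i : ZMod m) : Gen m
  | abar (i : ZMod m) : Gen m

open FreeAlgebra in
/-- The relations defining `Λ_q = KQ/I_q`: the path-algebra relations (the `e i` are
orthogonal idempotents summing to `1`, and the arrows compose according to the quiver),
together with the relations `a_i a_{i+1} = 0`, `ā_{i-1} ā_{i-2} = 0` and
`q_i a_i ā_i = ā_{i-1} a_{i-1}` generating `I_q`. -/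
inductive LambdaRel (K : Type*) [Field K] (m : ℕ) [NeZero m] (q : ZMod m → K) :
    FreeAlgebra K (Gen m) → FreeAlgebra K (Gen m) → Prop
  | idem (i j : ZMod m) :
      LambdaRel K m q (ι K (Gen.e i) * ι K (Gen.e j)) (if i = j then ι K (Gen.e i) else 0)
  | sum_e : LambdaRel K m q (∑ i : ZMod m, ι K (Gen.e i)) 1
  | ea (i j : ZMod m) :
      LambdaRel K m q (ι K (Gen.e j) * ι K (Gen.a i)) (if j = i then ι K (Gen.a i) else 0)
  | ae (i j : ZMod m) :
      LambdaRel K m q (ι K (Gen.a i) * ι K (Gen.e j)) (if j = i + 1 then ι K (Gen.a i) else 0)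
  | eb (i j : ZMod m) :
      LambdaRel K m q (ι K (Gen.e j) * ι K (Gen.abar i)) (if j = i + 1 then ι K (Gen.abar i) else 0)
  | be (i j : ZMod m) :
      LambdaRel K m q (ι K (Gen.abar i) * ι K (Gen.e j)) (if j = i then ι K (Gen.abar i) else 0)
  | aa (i : ZMod m) : LambdaRel K m q (ι K (Gen.a i) * ι K (Gen.a (i + 1))) 0
  | bb (i : ZMod m) : LambdaRel K m q (ι K (Gen.abar (i - 1)) * ι K (Gen.abar (i - 2))) 0
  | comm (i : ZMod m) :
      LambdaRel K m q (q i • (ι K (Gen.a i) * ι K (Gen.abar i)))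
        (ι K (Gen.abar (i - 1)) * ι K (Gen.a (i - 1)))

/-- The algebra `Λ_q = KQ/I_q` on the cyclic quiver with `m` vertices. -/
abbrev Lambda (K : Type*) [Field K] (m : ℕ) [NeZero m] (q : ZMod m → K) : Type _ :=
  RingQuot (LambdaRel K m q)

/-- The canonical map `KQ → Λ_q`. -/
noncomputable def LambdaMk (K : Type*) [Field K] (m : ℕ) [NeZero m] (q : ZMod m → K) :
    FreeAlgebra K (Gen m) →ₐ[K] Lambda K m q :=
  RingQuot.mkAlgHom K (LambdaRel K m q)

open MvPolynomial in
/-- The ideal of `K[x_0, …, x_{m-1}]` generated by all products `x_i x_j`. -/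
noncomputable def sqIdeal (K : Type*) [Field K] (m : ℕ) : Ideal (MvPolynomial (Fin m) K) :=
  Ideal.span {p | ∃ i j : Fin m, p = X i * X j}

namespace Stmt15Aux
open FreeAlgebra

variable {K : Type*} [Field K] {m : ℕ} [NeZero m] (q : ZMod m → K)

noncomputable def eg (i : ZMod m) : Lambda K m q := LambdaMk K m q (ι K (Gen.e i))
noncomputable def ag (i : ZMod m) : Lambda K m q := LambdaMk K m q (ι K (Gen.a i))
noncomputable def bg (i : ZMod m) : Lambda K m q := LambdaMk K m q (ι K (Gen.abar i))
noncomputable def xg (i : ZMod m) : Lambda K m q := ag q i * bg q i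

lemma lrel {x y} (h : LambdaRel K m q x y) : LambdaMk K m q x = LambdaMk K m q y :=
  RingQuot.mkAlgHom_rel K h

lemma mul_ee (i j : ZMod m) : eg q i * eg q j = if i = j then eg q i else 0 := by
  have h := lrel q (LambdaRel.idem (K := K) (q := q) i j)
  rw [map_mul, apply_ite (LambdaMk K m q), map_zero] at h
  exact h

lemma sum_eg : ∑ i : ZMod m, eg q i = 1 := by
  have h := lrel q (LambdaRel.sum_e (K := K) (q := q))
  rw [map_sum, map_one] at h
  exact h

lemma mul_ea (i j : ZMod m) : eg q j * ag q i = if j = i then ag q i else 0 := by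
  have h := lrel q (LambdaRel.ea (K := K) (q := q) i j)
  rw [map_mul, apply_ite (LambdaMk K m q), map_zero] at h
  exact h

lemma mul_ae (i j : ZMod m) : ag q i * eg q j = if j = i + 1 then ag q i else 0 := by
  have h := lrel q (LambdaRel.ae (K := K) (q := q) i j)
  rw [map_mul, apply_ite (LambdaMk K m q), map_zero] at h
  exact h

lemma mul_eb (i j : ZMod m) : eg q j * bg q i = if j = i + 1 then bg q i else 0 := by
  have h := lrel q (LambdaRel.eb (K := K) (q := q) i j)
  rw [map_mul, apply_ite (LambdaMk K m q), map_zero] at h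
  exact h

lemma mul_be (i j : ZMod m) : bg q i * eg q j = if j = i then bg q i else 0 := by
  have h := lrel q (LambdaRel.be (K := K) (q := q) i j)
  rw [map_mul, apply_ite (LambdaMk K m q), map_zero] at h
  exact h

lemma mul_aa (i j : ZMod m) : ag q i * ag q j = 0 := by
  by_cases h : j = i + 1
  · subst h
    have h := lrel q (LambdaRel.aa (K := K) (q := q) i)
    rw [map_mul, map_zero] at h
    exact h
  · have h1 : ag q i * eg q (i + 1) = ag q i := by rw [mul_ae, if_pos rfl]
    rw [← h1, mul_assoc, mul_ea, if_neg (fun hh => h hh.symm), mul_zero]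

lemma mul_bb (i j : ZMod m) : bg q i * bg q j = 0 := by
  by_cases h : j = i - 1
  · subst h
    have h := lrel q (LambdaRel.bb (K := K) (q := q) (i + 1))
    rw [map_mul, map_zero] at h
    have e1 : i + 1 - 1 = i := by ring
    have e2 : i + 1 - 2 = i - 1 := by ring
    rw [e1, e2] at h
    exact h
  · have h1 : bg q i * eg q i = bg q i := by rw [mul_be, if_pos rfl]
    have h2 : eg q i * bg q j = 0 := by
      rw [mul_eb, if_neg]
      intro hh
      exact h (by rw [hh]; ring)
    rw [← h1, mul_assoc, h2, mul_zero]

lemma mul_ab (i j : ZMod m) : ag q i * bg q j = if j = i then xg q i else 0 := by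
  split
  · next h => subst h; rfl
  · next h =>
    have h1 : ag q i * eg q (i + 1) = ag q i := by rw [mul_ae, if_pos rfl]
    have h2 : eg q (i + 1) * bg q j = 0 := by
      rw [mul_eb, if_neg (fun hh => h (add_right_cancel hh).symm)]
    rw [← h1, mul_assoc, h2, mul_zero]

lemma mul_ba (i j : ZMod m) :
    bg q i * ag q j = if j = i then q (i + 1) • xg q (i + 1) else 0 := by
  split
  · next h =>
    subst h
    have h := lrel q (LambdaRel.comm (K := K) (q := q) (j + 1))
    rw [map_smul, map_mul, map_mul] at h
    simpa [xg, ag, bg] using h.symm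
  · next h =>
    have h1 : bg q i * eg q i = bg q i := by rw [mul_be, if_pos rfl]
    have h2 : eg q i * ag q j = 0 := by rw [mul_ea, if_neg (fun hh => h hh.symm)]
    rw [← h1, mul_assoc, h2, mul_zero]

lemma mul_ax (i j : ZMod m) : ag q i * xg q j = 0 := by
  rw [xg, ← mul_assoc, mul_aa, zero_mul]

lemma mul_xa (i j : ZMod m) : xg q i * ag q j = 0 := by
  rw [xg, mul_assoc, mul_ba]
  split
  · rw [mul_smul_comm, mul_ax, smul_zero]
  · rw [mul_zero]

lemma mul_xe (i j : ZMod m) : xg q i * eg q j = if j = i then xg q i else 0 := by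
  rw [xg, mul_assoc, mul_be]
  split <;> simp [xg]

lemma mul_ex (i j : ZMod m) : eg q j * xg q i = if j = i then xg q i else 0 := by
  rw [xg, ← mul_assoc, mul_ea]
  split <;> simp [xg]

lemma mul_xb (i j : ZMod m) : xg q i * bg q j = 0 := by
  rw [xg, mul_assoc, mul_bb, mul_zero]

lemma mul_bx (i j : ZMod m) : bg q j * xg q i = 0 := by
  rw [xg, ← mul_assoc, mul_ba]
  split
  · rw [smul_mul_assoc, xg, mul_assoc, mul_bb, mul_zero, smul_zero]
  · rw [zero_mul]

lemma mul_xx (i j : ZMod m) : xg q i * xg q j = 0 := by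
  rw [show xg q j = ag q j * bg q j from rfl, ← mul_assoc, mul_xa, zero_mul]

end Stmt15Aux

namespace Stmt15Aux
open FreeAlgebra

variable {K : Type*} [Field K] {m : ℕ} [NeZero m] (q : ZMod m → K)

abbrev V (K : Type*) (m : ℕ) : Type _ :=
  (ZMod m → K) × (ZMod m → K) × (ZMod m → K) × (ZMod m → K)

def Te (j : ZMod m) : Module.End K (V K m) where
  toFun v := (fun k => if k = j then v.1 k else 0,
              fun k => if k = j then v.2.1 k else 0,
              fun k => if j = k + 1 then v.2.2.1 k else 0,
              fun k => if k = j then v.2.2.2 k else 0)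
  map_add' u v := by
    refine Prod.ext ?_ (Prod.ext ?_ (Prod.ext ?_ ?_)) <;> funext k <;> simp <;> split <;> simp
  map_smul' c v := by
    refine Prod.ext ?_ (Prod.ext ?_ (Prod.ext ?_ ?_)) <;> funext k <;> simp <;> split <;> simp

def Ta (j : ZMod m) : Module.End K (V K m) where
  toFun v := (0, fun k => if k = j then v.1 (j + 1) else 0, 0,
              fun k => if k = j then v.2.2.1 j else 0)
  map_add' u v := by
    refine Prod.ext ?_ (Prod.ext ?_ (Prod.ext ?_ ?_)) <;> funext k <;> simp <;> split <;> simp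
  map_smul' c v := by
    refine Prod.ext ?_ (Prod.ext ?_ (Prod.ext ?_ ?_)) <;> funext k <;> simp <;> split <;> simp

def Tb (j : ZMod m) : Module.End K (V K m) where
  toFun v := (0, 0, fun k => if k = j then v.1 j else 0,
              fun k => if k = j + 1 then q (j + 1) * v.2.1 j else 0)
  map_add' u v := by
    refine Prod.ext ?_ (Prod.ext ?_ (Prod.ext ?_ ?_)) <;> funext k <;> simp <;> split <;>
      simp [mul_add]
  map_smul' c v := by
    refine Prod.ext ?_ (Prod.ext ?_ (Prod.ext ?_ ?_)) <;> funext k <;> simp <;> split <;>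
      simp [mul_comm, mul_left_comm]

def gmap : Gen m → Module.End K (V K m)
  | .e i => Te i
  | .a i => Ta i
  | .abar i => Tb q i

noncomputable def phi0 : FreeAlgebra K (Gen m) →ₐ[K] Module.End K (V K m) :=
  FreeAlgebra.lift K (gmap q)

set_option maxHeartbeats 1600000 in
lemma hrel : ∀ ⦃x y⦄, LambdaRel K m q x y → phi0 q x = phi0 q y := by
  intro x y h
  cases h with
  | idem i j =>
    simp only [map_mul, phi0, lift_ι_apply, gmap, apply_ite (FreeAlgebra.lift K (gmap q)),
      map_zero]
    refine LinearMap.ext fun v => ?_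
    by_cases hij : i = j <;>
      · simp only [hij, if_pos, if_neg, ite_true, ite_false]
        refine Prod.ext ?_ (Prod.ext ?_ (Prod.ext ?_ ?_)) <;> funext k <;>
          simp [Te, Module.End.mul_apply] <;> (try split_ifs) <;> (try (intros; subst_vars)) <;> (try simp_all)
  | sum_e =>
    simp only [map_sum, map_one, phi0, lift_ι_apply, gmap]
    refine LinearMap.ext fun v => ?_
    simp only [LinearMap.coe_sum, Finset.sum_apply, Module.End.one_apply]
    refine Prod.ext ?_ (Prod.ext ?_ (Prod.ext ?_ ?_)) <;>
      simp [Te, Prod.fst_sum, Prod.snd_sum] <;> funext k <;>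
      simp [Finset.sum_apply, Finset.sum_ite_eq, Finset.sum_ite_eq']
  | ea i j =>
    simp only [map_mul, phi0, lift_ι_apply, gmap, apply_ite (FreeAlgebra.lift K (gmap q)),
      map_zero]
    refine LinearMap.ext fun v => ?_
    by_cases hij : j = i <;>
      · simp only [hij, if_pos, if_neg, ite_true, ite_false]
        refine Prod.ext ?_ (Prod.ext ?_ (Prod.ext ?_ ?_)) <;> funext k <;>
          simp [Te, Ta, Module.End.mul_apply] <;> (try split_ifs) <;> (try (intros; subst_vars)) <;> (try simp_all)
  | ae i j =>
    simp only [map_mul, phi0, lift_ι_apply, gmap, apply_ite (FreeAlgebra.lift K (gmap q)),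
      map_zero]
    refine LinearMap.ext fun v => ?_
    by_cases hij : j = i + 1 <;>
      · simp only [hij, if_pos, if_neg, ite_true, ite_false]
        refine Prod.ext ?_ (Prod.ext ?_ (Prod.ext ?_ ?_)) <;> funext k <;>
          simp [Te, Ta, Module.End.mul_apply] <;> (try split_ifs) <;> (try (intros; subst_vars)) <;> (try simp_all)
  | eb i j =>
    simp only [map_mul, phi0, lift_ι_apply, gmap, apply_ite (FreeAlgebra.lift K (gmap q)),
      map_zero]
    refine LinearMap.ext fun v => ?_
    by_cases hij : j = i + 1 <;>
      · simp only [hij, if_pos, if_neg, ite_true, ite_false]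
        refine Prod.ext ?_ (Prod.ext ?_ (Prod.ext ?_ ?_)) <;> funext k <;>
          simp [Te, Tb, Module.End.mul_apply] <;> (try split_ifs) <;> (try (intros; subst_vars)) <;> (try simp_all)
  | be i j =>
    simp only [map_mul, phi0, lift_ι_apply, gmap, apply_ite (FreeAlgebra.lift K (gmap q)),
      map_zero]
    refine LinearMap.ext fun v => ?_
    by_cases hij : j = i <;>
      · simp only [hij, if_pos, if_neg, ite_true, ite_false]
        refine Prod.ext ?_ (Prod.ext ?_ (Prod.ext ?_ ?_)) <;> funext k <;>
          simp [Te, Tb, Module.End.mul_apply] <;> (try split_ifs) <;> (try (intros; subst_vars)) <;> (try simp_all)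
  | aa i =>
    simp only [map_mul, map_zero, phi0, lift_ι_apply, gmap]
    refine LinearMap.ext fun v => ?_
    refine Prod.ext ?_ (Prod.ext ?_ (Prod.ext ?_ ?_)) <;> funext k <;>
      simp [Ta, Module.End.mul_apply] <;> (try split_ifs) <;> (try (intros; subst_vars)) <;> (try simp_all)
  | bb i =>
    simp only [map_mul, map_zero, phi0, lift_ι_apply, gmap]
    refine LinearMap.ext fun v => ?_
    refine Prod.ext ?_ (Prod.ext ?_ (Prod.ext ?_ ?_)) <;> funext k <;>
      simp [Tb, Module.End.mul_apply] <;> (try split_ifs) <;> (try (intros; subst_vars)) <;> (try simp_all)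
  | comm i =>
    simp only [map_smul, map_mul, phi0, lift_ι_apply, gmap]
    refine LinearMap.ext fun v => ?_
    have hii : i - 1 + 1 = i := by ring
    refine Prod.ext ?_ (Prod.ext ?_ (Prod.ext ?_ ?_)) <;> funext k <;>
      simp [Ta, Tb, Module.End.mul_apply, hii] <;> (try split_ifs) <;> (try (intros; subst_vars)) <;> (try simp_all)

noncomputable def Phi : Lambda K m q →ₐ[K] Module.End K (V K m) :=
  RingQuot.liftAlgHom K ⟨phi0 q, hrel q⟩

lemma Phi_mk (x : FreeAlgebra K (Gen m)) : Phi q (LambdaMk K m q x) = phi0 q x := by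
  rw [Phi, LambdaMk, RingQuot.liftAlgHom_mkAlgHom_apply]

def vone : V K m := (fun _ => 1, 0, 0, 0)

noncomputable def psi : Lambda K m q →ₗ[K] V K m where
  toFun z := Phi q z (vone)
  map_add' u v := by simp
  map_smul' c v := by simp

lemma psi_eg (i : ZMod m) :
    psi q (eg q i) = (fun k => if k = i then 1 else 0, 0, 0, 0) := by
  rw [psi]
  simp only [LinearMap.coe_mk, AddHom.coe_mk, eg, Phi_mk, phi0, lift_ι_apply, gmap]
  refine Prod.ext ?_ (Prod.ext ?_ (Prod.ext ?_ ?_)) <;> funext k <;>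
    simp [Te, vone] <;> (try split_ifs) <;> (try (intros; subst_vars)) <;> (try simp_all)

lemma psi_ag (i : ZMod m) :
    psi q (ag q i) = (0, fun k => if k = i then 1 else 0, 0, 0) := by
  rw [psi]
  simp only [LinearMap.coe_mk, AddHom.coe_mk, ag, Phi_mk, phi0, lift_ι_apply, gmap]
  refine Prod.ext ?_ (Prod.ext ?_ (Prod.ext ?_ ?_)) <;> funext k <;>
    simp [Ta, vone] <;> (try split_ifs) <;> (try (intros; subst_vars)) <;> (try simp_all)

lemma psi_bg (i : ZMod m) :
    psi q (bg q i) = (0, 0, fun k => if k = i then 1 else 0, 0) := by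
  rw [psi]
  simp only [LinearMap.coe_mk, AddHom.coe_mk, bg, Phi_mk, phi0, lift_ι_apply, gmap]
  refine Prod.ext ?_ (Prod.ext ?_ (Prod.ext ?_ ?_)) <;> funext k <;>
    simp [Tb, vone] <;> (try split_ifs) <;> (try (intros; subst_vars)) <;> (try simp_all)

lemma psi_xg (i : ZMod m) :
    psi q (xg q i) = (0, 0, 0, fun k => if k = i then 1 else 0) := by
  rw [psi]
  simp only [LinearMap.coe_mk, AddHom.coe_mk, xg, ag, bg, map_mul, Phi_mk, phi0, lift_ι_apply,
    gmap]
  have : Phi q (LambdaMk K m q (ι K (Gen.a i))) = Ta i := by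
    rw [Phi_mk, phi0, lift_ι_apply]; rfl
  refine Prod.ext ?_ (Prod.ext ?_ (Prod.ext ?_ ?_)) <;> funext k <;>
    simp [Ta, Tb, vone, Module.End.mul_apply] <;> (try split_ifs) <;> (try (intros; subst_vars)) <;> (try simp_all)

lemma psi_one : psi q (1 : Lambda K m q) = vone := by
  rw [psi]
  simp

end Stmt15Aux

namespace Stmt15Aux
open FreeAlgebra

variable {K : Type*} [Field K] {m : ℕ} [NeZero m] (q : ZMod m → K)

noncomputable def fam : Fin 4 × ZMod m → Lambda K m q := fun p =>
  ![eg q, ag q, bg q, xg q] p.1 p.2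

lemma psi_fam_sum (c : Fin 4 × ZMod m → K) :
    psi q (∑ p, c p • fam q p) =
      (fun k => c (0, k), fun k => c (1, k), fun k => c (2, k), fun k => c (3, k)) := by
  rw [map_sum]
  simp only [map_smul]
  rw [Fintype.sum_prod_type]
  rw [Fin.sum_univ_four]
  simp only [fam, Matrix.cons_val_zero, Matrix.cons_val_one, Matrix.head_cons,
    Matrix.cons_val_two, Matrix.tail_cons, Matrix.cons_val_three, psi_eg, psi_ag, psi_bg, psi_xg]
  refine Prod.ext ?_ (Prod.ext ?_ (Prod.ext ?_ ?_)) <;> funext k <;>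
    simp [Prod.fst_sum, Prod.snd_sum, Finset.sum_apply, smul_ite, Finset.sum_ite_eq',
      mul_ite]

lemma indep0 (c : Fin 4 × ZMod m → K) (h : ∑ p, c p • fam q p = 0) : c = 0 := by
  have h2 := congrArg (psi q) h
  rw [psi_fam_sum, map_zero] at h2
  funext p
  obtain ⟨t, i⟩ := p
  fin_cases t
  · exact congrFun (congrArg (fun v => v.1) h2) i
  · exact congrFun (congrArg (fun v => v.2.1) h2) i
  · exact congrFun (congrArg (fun v => v.2.2.1) h2) i
  · exact congrFun (congrArg (fun v => v.2.2.2) h2) i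

lemma rep_eq (c d : Fin 4 × ZMod m → K) (h : ∑ p, c p • fam q p = ∑ p, d p • fam q p) :
    c = d := by
  have h0 : ∑ p, (c - d) p • fam q p = 0 := by
    have e1 : ∀ p : Fin 4 × ZMod m, (c - d) p • fam q p = c p • fam q p - d p • fam q p :=
      fun p => by rw [Pi.sub_apply]; exact sub_smul (c p) (d p) (fam q p)
    rw [Finset.sum_congr rfl fun p _ => e1 p, Finset.sum_sub_distrib, h, sub_self]
  have := indep0 q _ h0
  funext p
  have := congrFun this p
  simpa [sub_eq_zero] using this

lemma smul_fam_ne (k : K) (p : Fin 4 × ZMod m) (h : k • fam q p = 0) : k = 0 := by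
  have h0 : ∑ p', (fun p' => if p' = p then k else 0) p' • fam q p' = 0 := by
    rw [Finset.sum_eq_single p] <;> simp_all
  have := congrFun (indep0 q _ h0) p
  simpa using this

/-- The span of the 4m basis elements. -/
noncomputable def SpanS : Submodule K (Lambda K m q) := Submodule.span K (Set.range (fam q))

lemma eg_mem (i : ZMod m) : eg q i ∈ SpanS q := Submodule.subset_span ⟨(0, i), rfl⟩
lemma ag_mem (i : ZMod m) : ag q i ∈ SpanS q := Submodule.subset_span ⟨(1, i), rfl⟩
lemma bg_mem (i : ZMod m) : bg q i ∈ SpanS q := Submodule.subset_span ⟨(2, i), rfl⟩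
lemma xg_mem (i : ZMod m) : xg q i ∈ SpanS q := Submodule.subset_span ⟨(3, i), rfl⟩

lemma one_mem_SpanS : (1 : Lambda K m q) ∈ SpanS q := by
  rw [← sum_eg q]
  exact Submodule.sum_mem _ fun i _ => eg_mem q i

lemma mul_mem_SpanS {x y : Lambda K m q} (hx : x ∈ SpanS q) (hy : y ∈ SpanS q) :
    x * y ∈ SpanS q := by
  have key : ∀ p p' : Fin 4 × ZMod m, fam q p * fam q p' ∈ SpanS q := by
    rintro ⟨t, i⟩ ⟨t', j⟩
    fin_cases t <;> fin_cases t' <;> (simp only [fam]; simp) <;>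
      first
      | (rw [mul_ee] <;> split <;>
          first | exact eg_mem q _ | exact Submodule.zero_mem _)
      | (rw [mul_ea] <;> split <;>
          first | exact ag_mem q _ | exact Submodule.zero_mem _)
      | (rw [mul_ae] <;> split <;>
          first | exact ag_mem q _ | exact Submodule.zero_mem _)
      | (rw [mul_eb] <;> split <;>
          first | exact bg_mem q _ | exact Submodule.zero_mem _)
      | (rw [mul_be] <;> split <;>
          first | exact bg_mem q _ | exact Submodule.zero_mem _)
      | (rw [mul_ex] <;> split <;>
          first | exact xg_mem q _ | exact Submodule.zero_mem _)
      | (rw [mul_xe] <;> split <;>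
          first | exact xg_mem q _ | exact Submodule.zero_mem _)
      | (rw [mul_ab] <;> split <;>
          first | exact xg_mem q _ | exact Submodule.zero_mem _)
      | (rw [mul_ba] <;> split <;>
          first
          | exact Submodule.smul_mem _ _ (xg_mem q _)
          | exact Submodule.zero_mem _)
      | (rw [mul_aa]; exact Submodule.zero_mem _)
      | (rw [mul_bb]; exact Submodule.zero_mem _)
      | (rw [mul_ax]; exact Submodule.zero_mem _)
      | (rw [mul_xa]; exact Submodule.zero_mem _)
      | (rw [mul_xb]; exact Submodule.zero_mem _)
      | (rw [mul_bx]; exact Submodule.zero_mem _)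
      | (rw [mul_xx]; exact Submodule.zero_mem _)
  refine Submodule.span_induction (p := fun x _ => x * y ∈ SpanS q) ?_ ?_ ?_ ?_ hx
  · rintro x ⟨p, rfl⟩
    refine Submodule.span_induction (p := fun y _ => fam q p * y ∈ SpanS q) ?_ ?_ ?_ ?_ hy
    · rintro y ⟨p', rfl⟩; exact key p p'
    · simp
    · intro a b _ _ ha hb; rw [mul_add]; exact Submodule.add_mem _ ha hb
    · intro c a _ ha; rw [mul_smul_comm]; exact Submodule.smul_mem _ _ ha
  · simp
  · intro a b _ _ ha hb; rw [add_mul]; exact Submodule.add_mem _ ha hb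
  · intro c a _ ha; rw [smul_mul_assoc]; exact Submodule.smul_mem _ _ ha

lemma SpanS_eq_top : SpanS q = ⊤ := by
  have h1 : (Algebra.adjoin K (Set.range (fun g => LambdaMk K m q (ι K g)))
      : Subalgebra K (Lambda K m q)) = ⊤ := by
    have hsurj := RingQuot.mkAlgHom_surjective K (LambdaRel K m q)
    have : (⊤ : Subalgebra K (Lambda K m q)) = (⊤ : Subalgebra K (FreeAlgebra K (Gen m))).map
        (LambdaMk K m q) := by
      rw [Algebra.map_top, LambdaMk, (AlgHom.range_eq_top _).mpr hsurj]
    rw [this, ← FreeAlgebra.adjoin_range_ι, AlgHom.map_adjoin, ← Set.range_comp]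
    rfl
  refine top_unique ?_
  intro z _
  have hz : z ∈ Algebra.adjoin K (Set.range (fun g => LambdaMk K m q (ι K g))) := by
    rw [h1]; trivial
  refine Algebra.adjoin_induction ?_ ?_ ?_ ?_ hz
  · rintro x ⟨g, rfl⟩
    cases g with
    | e i => exact eg_mem q i
    | a i => exact ag_mem q i
    | abar i => exact bg_mem q i
  · intro r
    rw [Algebra.algebraMap_eq_smul_one]
    exact Submodule.smul_mem _ _ (one_mem_SpanS q)
  · intro a b _ _ ha hb; exact Submodule.add_mem _ ha hb
  · intro a b _ _ ha hb; exact mul_mem_SpanS q ha hb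

end Stmt15Aux

namespace Stmt15Aux
open FreeAlgebra

variable {K : Type*} [Field K] {m : ℕ} [NeZero m] (q : ZMod m → K)

lemma fam0 (i : ZMod m) : fam q (0, i) = eg q i := rfl
lemma fam1 (i : ZMod m) : fam q (1, i) = ag q i := rfl
lemma fam2 (i : ZMod m) : fam q (2, i) = bg q i := rfl
lemma fam3 (i : ZMod m) : fam q (3, i) = xg q i := rfl

lemma xg_mem_center (i : ZMod m) : xg q i ∈ Subalgebra.center K (Lambda K m q) := by
  rw [Subalgebra.mem_center_iff]
  intro w
  have hw : w ∈ SpanS q := by rw [SpanS_eq_top]; trivial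
  refine Submodule.span_induction (p := fun w _ => w * xg q i = xg q i * w) ?_ ?_ ?_ ?_ hw
  · rintro w ⟨⟨t, j⟩, rfl⟩
    fin_cases t <;> (simp only [fam]; simp) <;>
      first
      | rw [mul_ex, mul_xe]
      | rw [mul_ax, mul_xa]
      | rw [mul_bx, mul_xb]
      | rw [mul_xx, mul_xx]
  · simp
  · intro a b _ _ ha hb; rw [add_mul, mul_add, ha, hb]
  · intro r a _ ha; rw [smul_mul_assoc, mul_smul_comm, ha]

lemma zmod_ne_self_add_one (hm : 2 ≤ m) (j : ZMod m) : j ≠ j + 1 := by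
  haveI : Fact (1 < m) := ⟨hm⟩
  intro h
  have : (1 : ZMod m) = 0 := ((left_eq_add (a := j) (b := (1 : ZMod m))).mp h)
  exact one_ne_zero this

lemma zmod_ne_self_sub_one (hm : 2 ≤ m) (j : ZMod m) : j ≠ j - 1 := by
  intro h
  have h2 := zmod_ne_self_add_one hm (j - 1)
  rw [sub_add_cancel] at h2
  exact h2 h.symm

lemma const_of_step (f : ZMod m → K) (h : ∀ j, f j = f (j + 1)) (j : ZMod m) : f j = f 0 := by
  have key : ∀ n : ℕ, f (n : ZMod m) = f 0 := by
    intro n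
    induction n with
    | zero => simp
    | succ n ih => rw [Nat.cast_succ, ← h, ih]
  have := key j.val
  rwa [ZMod.natCast_rightInverse j] at this

/-- The family `1, x_0, …, x_{m-1}`. -/
noncomputable def bfam : Fin (m + 1) → Lambda K m q :=
  Fin.cases 1 (fun k => xg q (k : ZMod m))

lemma fin_cast_inj {k k' : Fin m} (h : ((k : ℕ) : ZMod m) = ((k' : ℕ) : ZMod m)) : k = k' := by
  have h1 := ZMod.val_cast_of_lt k.isLt
  have h2 := ZMod.val_cast_of_lt k'.isLt
  apply Fin.ext
  rw [← h1, ← h2, h]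

lemma indepB (g : Fin (m + 1) → K) (h : ∑ k, g k • bfam q k = 0) : g = 0 := by
  have h2 := congrArg (psi q) h
  rw [map_sum, map_zero] at h2
  simp only [map_smul] at h2
  rw [Fin.sum_univ_succ] at h2
  simp only [bfam, Fin.cases_zero, Fin.cases_succ, psi_one, psi_xg] at h2
  have hfst := congrArg (fun v : V K m => v.1 (0 : ZMod m)) h2
  have hlast := fun k0 : Fin m => congrArg (fun v : V K m => v.2.2.2 ((k0 : ℕ) : ZMod m)) h2
  simp only [Prod.fst_add, Prod.snd_add, Prod.smul_fst, Prod.smul_snd, Prod.fst_sum,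
    Prod.snd_sum, Pi.add_apply, Pi.smul_apply, Finset.sum_apply, vone, Prod.fst_zero,
    Prod.snd_zero, Pi.zero_apply, smul_eq_mul, mul_one, mul_zero, smul_zero,
    Finset.sum_const_zero, add_zero, mul_ite] at hfst hlast
  have hg0 : g 0 = 0 := by simpa using hfst
  funext k
  refine Fin.cases ?_ ?_ k
  · exact hg0
  · intro k0
    have hthis := hlast k0
    have hcond : ∀ k : Fin m, (((k0 : ℕ) : ZMod m) = ((k : ℕ) : ZMod m)) = (k = k0) :=
      fun k => by
        apply propext; constructor
        · intro hc; exact (fin_cast_inj hc.symm)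
        · rintro rfl; rfl
    simp only [hcond] at hthis
    simpa [Finset.sum_ite_eq'] using hthis

lemma center_rep (hm : 2 ≤ m) (z : Lambda K m q) (hz : z ∈ Subalgebra.center K (Lambda K m q)) :
    z ∈ Submodule.span K (Set.range (bfam q)) := by
  have hzs : z ∈ SpanS q := by rw [SpanS_eq_top]; trivial
  rw [SpanS, Submodule.mem_span_range_iff_exists_fun] at hzs
  obtain ⟨c, hc⟩ := hzs
  have hcomm : ∀ w, z * w = w * z := fun w => (Subalgebra.mem_center_iff.mp hz w).symm
  have hsplit : z = (∑ i, c (0, i) • eg q i) + (∑ i, c (1, i) • ag q i)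
      + (∑ i, c (2, i) • bg q i) + (∑ i, c (3, i) • xg q i) := by
    rw [← hc, Fintype.sum_prod_type, Fin.sum_univ_four]
    simp only [fam0, fam1, fam2, fam3]
  -- multiplication by eg j on the right
  have hR : ∀ j, z * eg q j = c (0, j) • eg q j + c (1, j - 1) • ag q (j - 1)
      + c (2, j) • bg q j + c (3, j) • xg q j := by
    intro j
    rw [hsplit, add_mul, add_mul, add_mul, Finset.sum_mul, Finset.sum_mul, Finset.sum_mul,
      Finset.sum_mul]
    congr 1
    congr 1
    congr 1
    · have e : ∀ i, (c (0, i) • eg q i) * eg q j = if i = j then c (0, i) • eg q i else 0 :=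
        fun i => by
          rw [smul_mul_assoc, mul_ee]
          split_ifs with h1
          · rfl
          · exact smul_zero _
      rw [Finset.sum_congr rfl fun i _ => e i, Finset.sum_ite_eq' Finset.univ j]
      rw [if_pos (Finset.mem_univ j)]
    · have e : ∀ i, (c (1, i) • ag q i) * eg q j = if i = j - 1 then c (1, i) • ag q i else 0 :=
        fun i => by
          rw [smul_mul_assoc, mul_ae]
          split_ifs with h1 h2 h2
          · rfl
          · (exfalso; apply h2; rw [h1]; ring)
          · (exfalso; apply h1; rw [h2]; ring)
          · exact smul_zero _
      rw [Finset.sum_congr rfl fun i _ => e i, Finset.sum_ite_eq' Finset.univ (j - 1)]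
      rw [if_pos (Finset.mem_univ (j - 1))]
    · have e : ∀ i, (c (2, i) • bg q i) * eg q j = if i = j then c (2, i) • bg q i else 0 :=
        fun i => by
          rw [smul_mul_assoc, mul_be]
          split_ifs with h1 h2 h2
          · rfl
          · exact absurd h1.symm h2
          · exact absurd h2.symm h1
          · exact smul_zero _
      rw [Finset.sum_congr rfl fun i _ => e i, Finset.sum_ite_eq' Finset.univ j]
      rw [if_pos (Finset.mem_univ j)]
    · have e : ∀ i, (c (3, i) • xg q i) * eg q j = if i = j then c (3, i) • xg q i else 0 :=
        fun i => by
          rw [smul_mul_assoc, mul_xe]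
          split_ifs with h1 h2 h2
          · rfl
          · exact absurd h1.symm h2
          · exact absurd h2.symm h1
          · exact smul_zero _
      rw [Finset.sum_congr rfl fun i _ => e i, Finset.sum_ite_eq' Finset.univ j]
      rw [if_pos (Finset.mem_univ j)]
  -- multiplication by eg j on the left
  have hL : ∀ j, eg q j * z = c (0, j) • eg q j + c (1, j) • ag q j
      + c (2, j - 1) • bg q (j - 1) + c (3, j) • xg q j := by
    intro j
    rw [hsplit, mul_add, mul_add, mul_add, Finset.mul_sum, Finset.mul_sum, Finset.mul_sum,
      Finset.mul_sum]
    congr 1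
    congr 1
    congr 1
    · have e : ∀ i, eg q j * (c (0, i) • eg q i) = if i = j then c (0, i) • eg q i else 0 :=
        fun i => by
          rw [mul_smul_comm, mul_ee]
          split_ifs with h1 h2 h2
          · rw [h1]
          · exact absurd h1.symm h2
          · exact absurd h2.symm h1
          · exact smul_zero _
      rw [Finset.sum_congr rfl fun i _ => e i, Finset.sum_ite_eq' Finset.univ j]
      rw [if_pos (Finset.mem_univ j)]
    · have e : ∀ i, eg q j * (c (1, i) • ag q i) = if i = j then c (1, i) • ag q i else 0 :=
        fun i => by
          rw [mul_smul_comm, mul_ea]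
          split_ifs with h1 h2 h2
          · rfl
          · exact absurd h1.symm h2
          · exact absurd h2.symm h1
          · exact smul_zero _
      rw [Finset.sum_congr rfl fun i _ => e i, Finset.sum_ite_eq' Finset.univ j]
      rw [if_pos (Finset.mem_univ j)]
    · have e : ∀ i, eg q j * (c (2, i) • bg q i) = if i = j - 1 then c (2, i) • bg q i else 0 :=
        fun i => by
          rw [mul_smul_comm, mul_eb]
          split_ifs with h1 h2 h2
          · rfl
          · (exfalso; apply h2; rw [h1]; ring)
          · (exfalso; apply h1; rw [h2]; ring)
          · exact smul_zero _
      rw [Finset.sum_congr rfl fun i _ => e i, Finset.sum_ite_eq' Finset.univ (j - 1)]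
      rw [if_pos (Finset.mem_univ (j - 1))]
    · have e : ∀ i, eg q j * (c (3, i) • xg q i) = if i = j then c (3, i) • xg q i else 0 :=
        fun i => by
          rw [mul_smul_comm, mul_ex]
          split_ifs with h1 h2 h2
          · rfl
          · exact absurd h1.symm h2
          · exact absurd h2.symm h1
          · exact smul_zero _
      rw [Finset.sum_congr rfl fun i _ => e i, Finset.sum_ite_eq' Finset.univ j]
      rw [if_pos (Finset.mem_univ j)]
  -- step 1 : a- and b- coefficients vanish
  have step1 : ∀ j, c (1, j) = 0 ∧ c (2, j) = 0 := by
    intro j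
    have hRL := (hR j).symm.trans ((hcomm (eg q j)).trans (hL j))
    have h2 := congrArg (psi q) hRL
    simp only [map_add, map_smul, psi_eg, psi_ag, psi_bg, psi_xg] at h2
    constructor
    · have h3 := congrArg (fun v : V K m => v.2.1 j) h2
      simpa [zmod_ne_self_sub_one hm j] using h3.symm
    · have h3 := congrArg (fun v : V K m => v.2.2.1 j) h2
      simpa [zmod_ne_self_sub_one hm j] using h3
  -- step 2 : reduced representation
  have hz2 : z = (∑ i, c (0, i) • eg q i) + ∑ i, c (3, i) • xg q i := by
    rw [hsplit]
    have e1 : (∑ i, c (1, i) • ag q i) = 0 := by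
      refine Finset.sum_eq_zero fun i _ => by rw [(step1 i).1, zero_smul]
    have e2 : (∑ i, c (2, i) • bg q i) = 0 := by
      refine Finset.sum_eq_zero fun i _ => by rw [(step1 i).2, zero_smul]
    rw [e1, e2, add_zero, add_zero]
  -- step 3 : the e-coefficients are constant
  have step3 : ∀ j, c (0, j) = c (0, j + 1) := by
    intro j
    have hRa : z * ag q j = c (0, j) • ag q j := by
      rw [hz2, add_mul, Finset.sum_mul, Finset.sum_mul]
      have e1 : ∀ i, (c (0, i) • eg q i) * ag q j
          = if i = j then c (0, i) • ag q j else 0 := fun i => by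
        rw [smul_mul_assoc, mul_ea]
        split_ifs with h1
        · rfl
        · exact smul_zero _
      have e2 : (∑ i, (c (3, i) • xg q i) * ag q j) = 0 := by
        refine Finset.sum_eq_zero fun i _ => by rw [smul_mul_assoc, mul_xa, smul_zero]
      rw [Finset.sum_congr rfl fun i _ => e1 i, Finset.sum_ite_eq' Finset.univ j, e2, add_zero]
      rw [if_pos (Finset.mem_univ j)]
    have hLa : ag q j * z = c (0, j + 1) • ag q j := by
      rw [hz2, mul_add, Finset.mul_sum, Finset.mul_sum]
      have e1 : ∀ i, ag q j * (c (0, i) • eg q i)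
          = if i = j + 1 then c (0, i) • ag q j else 0 := fun i => by
        rw [mul_smul_comm, mul_ae]
        split_ifs with h1
        · rfl
        · exact smul_zero _
      have e2 : (∑ i, ag q j * (c (3, i) • xg q i)) = 0 := by
        refine Finset.sum_eq_zero fun i _ => by rw [mul_smul_comm, mul_ax, smul_zero]
      rw [Finset.sum_congr rfl fun i _ => e1 i, Finset.sum_ite_eq' Finset.univ (j + 1), e2,
        add_zero]
      rw [if_pos (Finset.mem_univ (j + 1))]
    have heq : c (0, j) • ag q j = c (0, j + 1) • ag q j := by
      rw [← hRa, ← hLa, hcomm]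
    have h3 := congrArg (fun v : V K m => v.2.1 j) (congrArg (psi q) heq)
    simp only [map_smul, psi_ag] at h3
    simpa using h3
  have hconst : ∀ j, c (0, j) = c (0, 0) := const_of_step (fun j => c (0, j)) step3
  have hz3 : z = c (0, 0) • (1 : Lambda K m q) + ∑ i, c (3, i) • xg q i := by
    rw [hz2, ← sum_eg q, Finset.smul_sum]
    congr 1
    exact Finset.sum_congr rfl fun i _ => by rw [hconst i]
  rw [hz3]
  refine Submodule.add_mem _ ?_ ?_
  · refine Submodule.smul_mem _ _ (Submodule.subset_span ⟨0, ?_⟩)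
    simp [bfam]
  · refine Submodule.sum_mem _ fun i _ => Submodule.smul_mem _ _ ?_
    refine Submodule.subset_span ⟨Fin.succ ⟨i.val, ZMod.val_lt i⟩, ?_⟩
    simp only [bfam, Fin.cases_succ]
    congr 1
    exact ZMod.natCast_rightInverse i

end Stmt15Aux

namespace Stmt15Aux
open FreeAlgebra

variable {K : Type*} [Field K] {m : ℕ} [NeZero m] (q : ZMod m → K)

lemma bfam_mem_center (k : Fin (m + 1)) :
    bfam q k ∈ Subalgebra.center K (Lambda K m q) := by
  refine Fin.cases ?_ ?_ k
  · simp only [bfam, Fin.cases_zero]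
    exact one_mem _
  · intro k0
    simp only [bfam, Fin.cases_succ]
    exact xg_mem_center q _

noncomputable def cfam : Fin (m + 1) → Subalgebra.center K (Lambda K m q) :=
  fun k => ⟨bfam q k, bfam_mem_center q k⟩

lemma cfam_sum_val (d : Fin (m + 1) → K) :
    ((∑ k, d k • cfam q k : Subalgebra.center K (Lambda K m q)) : Lambda K m q)
      = ∑ k, d k • bfam q k := by
  rw [show ((∑ k, d k • cfam q k : Subalgebra.center K (Lambda K m q)) : Lambda K m q)
      = (Subalgebra.center K (Lambda K m q)).val.toLinearMap (∑ k, d k • cfam q k) from rfl,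
    map_sum]
  refine Finset.sum_congr rfl fun k _ => ?_
  simp [cfam]

lemma cfam_li : LinearIndependent K (cfam q) := by
  refine Fintype.linearIndependent_iffₛ.mpr fun f g hfg => ?_
  have h1 := congrArg Subtype.val hfg
  rw [cfam_sum_val q f, cfam_sum_val q g] at h1
  have h0 : ∑ k, (f - g) k • bfam q k = 0 := by
    simp only [Pi.sub_apply]
    rw [Finset.sum_congr rfl fun k _ => sub_smul (f k) (g k) (bfam q k), Finset.sum_sub_distrib,
      h1, sub_self]
  intro k
  exact sub_eq_zero.mp (congrFun (indepB q _ h0) k)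

lemma cfam_span (hm : 2 ≤ m) :
    ⊤ ≤ Submodule.span K (Set.range (cfam q)) := by
  intro z _
  have hz : (z : Lambda K m q) ∈ Submodule.span K (Set.range (bfam q)) :=
    center_rep q hm _ z.2
  rw [Submodule.mem_span_range_iff_exists_fun] at hz
  obtain ⟨d, hd⟩ := hz
  have hz2 : z = ∑ k, d k • cfam q k := by
    apply Subtype.ext
    rw [cfam_sum_val q d, hd]
  rw [hz2]
  exact Submodule.sum_mem _ fun k _ =>
    Submodule.smul_mem _ _ (Submodule.subset_span ⟨k, rfl⟩)

noncomputable def centerBasis (hm : 2 ≤ m) :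
    Module.Basis (Fin (m + 1)) K (Subalgebra.center K (Lambda K m q)) :=
  Module.Basis.mk (cfam_li q) (cfam_span q hm)

/-! ### The polynomial side -/

open MvPolynomial

noncomputable def pfam : Fin (m + 1) → MvPolynomial (Fin m) K :=
  Fin.cases 1 (fun i => X i)

lemma mem_T (p : MvPolynomial (Fin m) K) :
    p ∈ (Submodule.restrictScalars K (sqIdeal K m))
      ⊔ Submodule.span K (Set.range (pfam (K := K) (m := m))) := by
  set T := (Submodule.restrictScalars K (sqIdeal K m))
      ⊔ Submodule.span K (Set.range (pfam (K := K) (m := m))) with hT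
  induction p using MvPolynomial.induction_on with
  | C a =>
    apply Submodule.mem_sup_right
    have : (C a : MvPolynomial (Fin m) K) = a • (1 : MvPolynomial (Fin m) K) := by
      rw [smul_eq_C_mul, mul_one]
    rw [this]
    exact Submodule.smul_mem _ _ (Submodule.subset_span ⟨0, by simp [pfam]⟩)
  | add p r hp hr => exact Submodule.add_mem _ hp hr
  | mul_X p i hp =>
    rw [Submodule.mem_sup] at hp
    obtain ⟨a, ha, b, hb, rfl⟩ := hp
    rw [add_mul]
    refine Submodule.add_mem _ ?_ ?_
    · apply Submodule.mem_sup_left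
      exact Ideal.mul_mem_right _ _ ha
    · refine Submodule.span_induction (p := fun b _ => b * X i ∈ T) ?_ ?_ ?_ ?_ hb
      · rintro y ⟨k, rfl⟩
        refine Fin.cases ?_ ?_ k
        · simp only [pfam, Fin.cases_zero, one_mul]
          exact Submodule.mem_sup_right (Submodule.subset_span ⟨Fin.succ i, by simp [pfam]⟩)
        · intro k0
          simp only [pfam, Fin.cases_succ]
          apply Submodule.mem_sup_left
          exact Ideal.subset_span ⟨k0, i, rfl⟩
      · simp
      · intro y z _ _ hy hz; rw [add_mul]; exact Submodule.add_mem _ hy hz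
      · intro r y _ hy; rw [smul_mul_assoc]; exact Submodule.smul_mem _ _ hy

noncomputable def fpoly : MvPolynomial (Fin m) K →ₐ[K] Subalgebra.center K (Lambda K m q) :=
  aeval (fun i : Fin m => cfam q (Fin.succ i))

lemma fpoly_pfam (k : Fin (m + 1)) : fpoly q (pfam k) = cfam q k := by
  refine Fin.cases ?_ ?_ k
  · simp only [pfam, Fin.cases_zero, map_one]
    apply Subtype.ext
    simp [cfam, bfam]
  · intro k0
    simp only [pfam, Fin.cases_succ, fpoly, aeval_X]

lemma fpoly_ker : ∀ a ∈ sqIdeal K m, fpoly q a = 0 := by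
  have hle : sqIdeal K m ≤ RingHom.ker (fpoly q (K := K) (m := m)).toRingHom := by
    rw [sqIdeal, Ideal.span_le]
    rintro p ⟨i, j, rfl⟩
    rw [SetLike.mem_coe, RingHom.mem_ker]
    have : fpoly q (X i * X j : MvPolynomial (Fin m) K)
        = cfam q (Fin.succ i) * cfam q (Fin.succ j) := by
      rw [map_mul, fpoly, aeval_X, aeval_X]
    rw [show ((fpoly q).toRingHom (X i * X j) : Subalgebra.center K (Lambda K m q))
        = fpoly q (X i * X j) from rfl, this]
    apply Subtype.ext
    have : (bfam q (Fin.succ i)) * (bfam q (Fin.succ j)) = 0 := by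
      simp only [bfam, Fin.cases_succ]
      exact mul_xx q _ _
    simpa [cfam] using this
  intro a ha
  exact RingHom.mem_ker.mp (hle ha)

noncomputable def fbar (hm : 2 ≤ m) :
    (MvPolynomial (Fin m) K ⧸ sqIdeal K m) →ₐ[K] Subalgebra.center K (Lambda K m q) :=
  Ideal.Quotient.liftₐ (sqIdeal K m) (fpoly q) (fpoly_ker q)

lemma fbar_surj (hm : 2 ≤ m) : Function.Surjective (fbar q hm) := by
  intro z
  have hz : z ∈ Submodule.span K (Set.range (cfam q)) := cfam_span q hm trivial
  rw [Submodule.mem_span_range_iff_exists_fun] at hz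
  obtain ⟨d, hd⟩ := hz
  refine ⟨Ideal.Quotient.mk _ (∑ k, d k • pfam k), ?_⟩
  rw [fbar, Ideal.Quotient.liftₐ_apply]
  show fpoly q (∑ k, d k • pfam k) = z
  rw [map_sum]
  simp only [map_smul, fpoly_pfam]
  exact hd

lemma fbar_inj (hm : 2 ≤ m) : Function.Injective (fbar q hm) := by
  rw [injective_iff_map_eq_zero]
  intro x hx
  obtain ⟨p, rfl⟩ := Ideal.Quotient.mk_surjective x
  have hfp : fpoly q p = 0 := by
    rw [fbar, Ideal.Quotient.liftₐ_apply] at hx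
    exact hx
  have hp := mem_T (K := K) (m := m) p
  rw [Submodule.mem_sup] at hp
  obtain ⟨a, ha, b, hb, rfl⟩ := hp
  rw [Submodule.mem_span_range_iff_exists_fun] at hb
  obtain ⟨d, hd⟩ := hb
  have hfa : fpoly q a = 0 := fpoly_ker q a ha
  have hfb : fpoly q b = 0 := by
    have h2 : fpoly q a + fpoly q b = 0 := by rw [← map_add]; exact hfp
    rwa [hfa, zero_add] at h2
  have hsum : ∑ k, d k • cfam q k = 0 := by
    rw [← hd] at hfb
    rw [map_sum] at hfb
    simpa only [map_smul, fpoly_pfam] using hfb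
  have hd0 : ∀ k, d k = 0 := fun k =>
    Fintype.linearIndependent_iffₛ.mp (cfam_li q) d 0 (by rw [hsum]; simp) k
  have hb0 : b = 0 := by
    rw [← hd]
    exact Finset.sum_eq_zero fun k _ => by rw [hd0 k, zero_smul]
  rw [hb0, add_zero, Ideal.Quotient.eq_zero_iff_mem]
  exact ha

end Stmt15Aux


open FreeAlgebra MvPolynomial in
/-- The centre of `Λ_q` (for `m ≥ 2`) has `K`-basis `{1, x_0, …, x_{m-1}}` where
`x_i = a_i ā_i`; it is isomorphic to `K[x_0,…,x_{m-1}]/(x_i x_j)` and has dimension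
`m + 1`. -/
theorem stmt15 (K : Type*) [Field K] (m : ℕ) [NeZero m] (hm : 2 ≤ m)
    (q : ZMod m → K) (hq : ∀ i, q i ≠ 0) :
    (∀ i : ZMod m, LambdaMk K m q (ι K (Gen.a i) * ι K (Gen.abar i))
        ∈ Subalgebra.center K (Lambda K m q)) ∧
    (∃ b : Module.Basis (Fin (m + 1)) K (Subalgebra.center K (Lambda K m q)),
      (b 0 : Lambda K m q) = 1 ∧
      ∀ i : Fin m, (b i.succ : Lambda K m q)
        = LambdaMk K m q (ι K (Gen.a (i : ZMod m)) * ι K (Gen.abar (i : ZMod m)))) ∧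
    Module.finrank K (Subalgebra.center K (Lambda K m q)) = m + 1 ∧
    Nonempty ((Subalgebra.center K (Lambda K m q)) ≃ₐ[K]
      (MvPolynomial (Fin m) K ⧸ sqIdeal K m)) := by
  open Stmt15Aux in
  refine ⟨?_, ⟨centerBasis q hm, ?_, ?_⟩, ?_, ?_⟩
  · intro i
    have h := xg_mem_center q i
    rwa [show xg q i = LambdaMk K m q (ι K (Gen.a i) * ι K (Gen.abar i)) by
      rw [xg, ag, bg, map_mul]] at h
  · rw [centerBasis, Module.Basis.mk_apply]
    simp [cfam, bfam]
  · intro i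
    rw [centerBasis, Module.Basis.mk_apply]
    have : ((cfam q i.succ : Subalgebra.center K (Lambda K m q)) : Lambda K m q)
        = xg q (i : ZMod m) := by simp [cfam, bfam]
    rw [this, xg, ag, bg, map_mul]
  · rw [Module.finrank_eq_card_basis (centerBasis q hm), Fintype.card_fin]
  · exact ⟨(AlgEquiv.ofBijective (fbar q hm) ⟨fbar_inj q hm, fbar_surj q hm⟩).symm⟩
end

section
/- Let K be a field, m ≥ 1, q_0,…,q_{m-1} ∈ K^*, and Λ_q = KQ/I_q the cyclic-quiver algebra with relations a_i a_{i+1}, ā_{i-1} ā_{i-2}, q_i a_i ā_i − ā_{i-1} a_{i-1}. Setting z = (q_0 q_1 ⋯ q_{m-1}, 1, 1, …, 1), the assignment a_i ↦ q_0 q_1 ⋯ q_i · a_i, ā_i ↦ ā_i, e_i ↦ e_i induces a K-algebra isomorphism Λ_q ≅ Λ_z. -/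
open FreeAlgebra in

noncomputable def cfac {K : Type*} [Field K] {m : ℕ} [NeZero m] (q : ZMod m → K) (i : ZMod m) : K :=
  ∏ k ∈ Finset.range (i.val + 1), q (k : ZMod m)

lemma cfac_ne_zero {K : Type*} [Field K] {m : ℕ} [NeZero m] (q : ZMod m → K)
    (hq : ∀ i, q i ≠ 0) (i : ZMod m) : cfac q i ≠ 0 :=
  Finset.prod_ne_zero_iff.mpr fun k _ => hq _

lemma prod_range_eq {K : Type*} [Field K] {m : ℕ} [NeZero m] (f : ZMod m → K) :
    ∏ k ∈ Finset.range m, f (k : ZMod m) = ∏ j : ZMod m, f j := by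
  refine Finset.prod_nbij' (f := fun k : ℕ => f ((k : ZMod m))) (g := f)
    (Nat.cast : ℕ → ZMod m) (ZMod.val : ZMod m → ℕ) ?_ ?_ ?_ ?_ ?_
  · intro k _; exact Finset.mem_univ _
  · intro j _; exact Finset.mem_range.mpr (ZMod.val_lt j)
  · intro k hk; exact ZMod.val_cast_of_lt (Finset.mem_range.mp hk)
  · intro j _; simp [ZMod.natCast_val, ZMod.cast_id]
  · intro k _; rfl

lemma val_sub_one {m : ℕ} [NeZero m] {i : ZMod m} (hi : i ≠ 0) : (i - 1).val = i.val - 1 := by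
  have h1 : 1 ≤ i.val := Nat.one_le_iff_ne_zero.mpr (fun h => hi ((ZMod.val_eq_zero i).mp h))
  have hcast : ((i.val : ℕ) : ZMod m) = i := by simp [ZMod.natCast_val, ZMod.cast_id]
  have : (i - 1 : ZMod m) = ((i.val - 1 : ℕ) : ZMod m) := by
    rw [Nat.cast_sub h1, hcast, Nat.cast_one]
  rw [this, ZMod.val_cast_of_lt (lt_of_le_of_lt (Nat.sub_le _ _) (ZMod.val_lt i))]

lemma key_scalar {K : Type*} [Field K] {m : ℕ} [NeZero m] (q : ZMod m → K) (i : ZMod m) :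
    (if i = 0 then ∏ j : ZMod m, q j else 1) * cfac q i = q i * cfac q (i - 1) := by
  by_cases h : i = 0
  · subst h
    obtain ⟨n, rfl⟩ := Nat.exists_eq_succ_of_ne_zero (NeZero.ne m)
    have hv : ((0 : ZMod (n+1)) - 1).val = n := by
      simpa using ZMod.val_neg_one n
    simp only [if_true, reduceIte, cfac, hv, ZMod.val_zero, zero_add, Finset.prod_range_one,
      Nat.cast_zero]
    rw [prod_range_eq]
    ring
  · have hv := val_sub_one h
    have h1 : 1 ≤ i.val := Nat.one_le_iff_ne_zero.mpr (fun h0 => h ((ZMod.val_eq_zero i).mp h0))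
    have hc : ((i.val : ℕ) : ZMod m) = i := by simp [ZMod.natCast_val, ZMod.cast_id]
    simp only [if_neg h, one_mul, cfac, hv, Nat.sub_add_cancel h1]
    rw [Finset.prod_range_succ, hc, mul_comm]

open FreeAlgebra in
/-- `Λ_q` depends, up to isomorphism, only on the product `ζ = q_0 ⋯ q_{m-1}`: setting
`z = (q_0 q_1 ⋯ q_{m-1}, 1, …, 1)`, the assignment `a_i ↦ q_0 q_1 ⋯ q_i · a_i`,
`ā_i ↦ ā_i`, `e_i ↦ e_i` induces a `K`-algebra isomorphism `Λ_q ≅ Λ_z`. -/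
theorem stmt16 (K : Type*) [Field K] (m : ℕ) [NeZero m]
    (q : ZMod m → K) (hq : ∀ i, q i ≠ 0)
    (z : ZMod m → K) (hz : z = fun i => if i = 0 then ∏ j : ZMod m, q j else 1) :
    ∃ φ : Lambda K m q ≃ₐ[K] Lambda K m z,
      (∀ i : ZMod m, φ.symm (LambdaMk K m z (ι K (Gen.e i))) = LambdaMk K m q (ι K (Gen.e i))) ∧
      (∀ i : ZMod m, φ.symm (LambdaMk K m z (ι K (Gen.a i)))
          = (∏ k ∈ Finset.range (i.val + 1), q (k : ZMod m)) • LambdaMk K m q (ι K (Gen.a i))) ∧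
      (∀ i : ZMod m, φ.symm (LambdaMk K m z (ι K (Gen.abar i))) = LambdaMk K m q (ι K (Gen.abar i))) := by

  subst hz
  set z : ZMod m → K := fun i => if i = 0 then ∏ j : ZMod m, q j else 1 with hzdef
  have hzne : ∀ i, z i ≠ 0 := by
    intro i
    simp only [hzdef]
    split_ifs
    · exact Finset.prod_ne_zero_iff.mpr fun j _ => hq j
    · exact one_ne_zero
  have hcne : ∀ i, cfac q i ≠ 0 := cfac_ne_zero q hq
  set Mq := LambdaMk K m q with hMq
  set Mz := LambdaMk K m z with hMz
  have relq : ∀ {x y}, LambdaRel K m q x y → Mq x = Mq y := fun h => RingQuot.mkAlgHom_rel K h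
  have relz : ∀ {x y}, LambdaRel K m z x y → Mz x = Mz y := fun h => RingQuot.mkAlgHom_rel K h
  -- F : Free → Λ_q  (sends a_i ↦ c_i • a_i), respects LambdaRel z
  set F : FreeAlgebra K (Gen m) →ₐ[K] Lambda K m q := FreeAlgebra.lift K (fun g =>
    match g with
    | Gen.e i => Mq (ι K (Gen.e i))
    | Gen.a i => cfac q i • Mq (ι K (Gen.a i))
    | Gen.abar i => Mq (ι K (Gen.abar i))) with hF
  have hFe : ∀ i, F (ι K (Gen.e i)) = Mq (ι K (Gen.e i)) := fun i => by
    rw [hF, FreeAlgebra.lift_ι_apply]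
  have hFa : ∀ i, F (ι K (Gen.a i)) = cfac q i • Mq (ι K (Gen.a i)) := fun i => by
    rw [hF, FreeAlgebra.lift_ι_apply]
  have hFb : ∀ i, F (ι K (Gen.abar i)) = Mq (ι K (Gen.abar i)) := fun i => by
    rw [hF, FreeAlgebra.lift_ι_apply]
  have hFrel : ∀ ⦃x y⦄, LambdaRel K m z x y → F x = F y := by
    intro x y h
    cases h with
    | idem i j =>
        rw [map_mul, hFe, hFe, apply_ite F, hFe, map_zero, ← map_mul,
          relq (LambdaRel.idem i j), apply_ite Mq, map_zero]
    | sum_e =>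
        rw [map_sum, map_one]
        simp only [hFe]
        rw [← map_sum]
        exact (relq LambdaRel.sum_e).trans (map_one Mq)
    | ea i j =>
        rw [map_mul, hFe, hFa, apply_ite F, hFa, map_zero, mul_smul_comm, ← map_mul]
        rw [relq (LambdaRel.ea i j)]
        split_ifs <;> simp
    | ae i j =>
        rw [map_mul, hFe, hFa, apply_ite F, hFa, map_zero, smul_mul_assoc, ← map_mul]
        rw [relq (LambdaRel.ae i j)]
        split_ifs <;> simp
    | eb i j =>
        rw [map_mul, hFe, hFb, apply_ite F, hFb, map_zero, ← map_mul,
          relq (LambdaRel.eb i j), apply_ite Mq, map_zero]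
    | be i j =>
        rw [map_mul, hFe, hFb, apply_ite F, hFb, map_zero, ← map_mul,
          relq (LambdaRel.be i j), apply_ite Mq, map_zero]
    | aa i =>
        rw [map_mul, hFa, hFa, map_zero, smul_mul_assoc, mul_smul_comm, ← map_mul,
          relq (LambdaRel.aa i), map_zero, smul_zero, smul_zero]
    | bb i =>
        rw [map_mul, hFb, hFb, map_zero, ← map_mul, relq (LambdaRel.bb i), map_zero]
    | comm i =>
        have h1 : Mq (ι K (Gen.abar (i-1)) * ι K (Gen.a (i-1)))
            = q i • Mq (ι K (Gen.a i) * ι K (Gen.abar i)) := by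
          rw [← relq (LambdaRel.comm i), map_smul]
        rw [map_smul, map_mul, hFa, hFb, map_mul, hFb, hFa, smul_mul_assoc, ← map_mul,
          mul_smul_comm, ← map_mul, h1, smul_smul, smul_smul]
        congr 1
        rw [mul_comm (cfac q (i-1)) (q i)]
        simpa only [hzdef] using key_scalar q i
  -- G : Free → Λ_z  (sends a_i ↦ c_i⁻¹ • a_i), respects LambdaRel q
  set G : FreeAlgebra K (Gen m) →ₐ[K] Lambda K m z := FreeAlgebra.lift K (fun g =>
    match g with
    | Gen.e i => Mz (ι K (Gen.e i))
    | Gen.a i => (cfac q i)⁻¹ • Mz (ι K (Gen.a i))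
    | Gen.abar i => Mz (ι K (Gen.abar i))) with hG
  have hGe : ∀ i, G (ι K (Gen.e i)) = Mz (ι K (Gen.e i)) := fun i => by
    rw [hG, FreeAlgebra.lift_ι_apply]
  have hGa : ∀ i, G (ι K (Gen.a i)) = (cfac q i)⁻¹ • Mz (ι K (Gen.a i)) := fun i => by
    rw [hG, FreeAlgebra.lift_ι_apply]
  have hGb : ∀ i, G (ι K (Gen.abar i)) = Mz (ι K (Gen.abar i)) := fun i => by
    rw [hG, FreeAlgebra.lift_ι_apply]
  have hGrel : ∀ ⦃x y⦄, LambdaRel K m q x y → G x = G y := by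
    intro x y h
    cases h with
    | idem i j =>
        rw [map_mul, hGe, hGe, apply_ite G, hGe, map_zero, ← map_mul,
          relz (LambdaRel.idem i j), apply_ite Mz, map_zero]
    | sum_e =>
        rw [map_sum, map_one]
        simp only [hGe]
        rw [← map_sum]
        exact (relz LambdaRel.sum_e).trans (map_one Mz)
    | ea i j =>
        rw [map_mul, hGe, hGa, apply_ite G, hGa, map_zero, mul_smul_comm, ← map_mul]
        rw [relz (LambdaRel.ea i j)]
        split_ifs <;> simp
    | ae i j =>
        rw [map_mul, hGe, hGa, apply_ite G, hGa, map_zero, smul_mul_assoc, ← map_mul]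
        rw [relz (LambdaRel.ae i j)]
        split_ifs <;> simp
    | eb i j =>
        rw [map_mul, hGe, hGb, apply_ite G, hGb, map_zero, ← map_mul,
          relz (LambdaRel.eb i j), apply_ite Mz, map_zero]
    | be i j =>
        rw [map_mul, hGe, hGb, apply_ite G, hGb, map_zero, ← map_mul,
          relz (LambdaRel.be i j), apply_ite Mz, map_zero]
    | aa i =>
        rw [map_mul, hGa, hGa, map_zero, smul_mul_assoc, mul_smul_comm, ← map_mul,
          relz (LambdaRel.aa i), map_zero, smul_zero, smul_zero]
    | bb i =>
        rw [map_mul, hGb, hGb, map_zero, ← map_mul, relz (LambdaRel.bb i), map_zero]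
    | comm i =>
        have h1 : Mz (ι K (Gen.abar (i-1)) * ι K (Gen.a (i-1)))
            = z i • Mz (ι K (Gen.a i) * ι K (Gen.abar i)) := by
          rw [← relz (LambdaRel.comm i), map_smul]
        rw [map_smul, map_mul, hGa, hGb, map_mul, hGb, hGa, smul_mul_assoc, ← map_mul,
          mul_smul_comm, ← map_mul, h1, smul_smul, smul_smul]
        congr 1
        have hk := key_scalar q i
        have h1' := hcne i
        have h2' := hcne (i-1)
        simp only [hzdef]
        split_ifs with h0
        · rw [if_pos h0] at hk
          field_simp
          linear_combination -hk
        · rw [if_neg h0] at hk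
          field_simp
          linear_combination -hk
  set ψ : Lambda K m z →ₐ[K] Lambda K m q := RingQuot.liftAlgHom K ⟨F, hFrel⟩ with hψ
  set φ0 : Lambda K m q →ₐ[K] Lambda K m z := RingQuot.liftAlgHom K ⟨G, hGrel⟩ with hφ0
  have hψmk : ∀ x, ψ (Mz x) = F x := fun x => RingQuot.liftAlgHom_mkAlgHom_apply K F hFrel x
  have hφ0mk : ∀ x, φ0 (Mq x) = G x := fun x => RingQuot.liftAlgHom_mkAlgHom_apply K G hGrel x
  have hmkz : ∀ x, (RingQuot.mkAlgHom K (LambdaRel K m z)) x = Mz x := fun _ => rfl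
  have hmkq : ∀ x, (RingQuot.mkAlgHom K (LambdaRel K m q)) x = Mq x := fun _ => rfl
  have h1 : φ0.comp ψ = AlgHom.id K (Lambda K m z) := by
    apply RingQuot.ringQuot_ext'
    apply FreeAlgebra.hom_ext
    funext g
    cases g with
    | e i =>
        simp only [Function.comp_apply, AlgHom.coe_comp, AlgHom.coe_id, id_eq]
        rw [hmkz, hψmk, hFe, hφ0mk, hGe]
    | a i =>
        simp only [Function.comp_apply, AlgHom.coe_comp, AlgHom.coe_id, id_eq]
        rw [hmkz, hψmk, hFa, map_smul, hφ0mk, hGa, smul_smul, mul_inv_cancel₀ (hcne i), one_smul]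
    | abar i =>
        simp only [Function.comp_apply, AlgHom.coe_comp, AlgHom.coe_id, id_eq]
        rw [hmkz, hψmk, hFb, hφ0mk, hGb]
  have h2 : ψ.comp φ0 = AlgHom.id K (Lambda K m q) := by
    apply RingQuot.ringQuot_ext'
    apply FreeAlgebra.hom_ext
    funext g
    cases g with
    | e i =>
        simp only [Function.comp_apply, AlgHom.coe_comp, AlgHom.coe_id, id_eq]
        rw [hmkq, hφ0mk, hGe, hψmk, hFe]
    | a i =>
        simp only [Function.comp_apply, AlgHom.coe_comp, AlgHom.coe_id, id_eq]
        rw [hmkq, hφ0mk, hGa, map_smul, hψmk, hFa, smul_smul, inv_mul_cancel₀ (hcne i), one_smul]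
    | abar i =>
        simp only [Function.comp_apply, AlgHom.coe_comp, AlgHom.coe_id, id_eq]
        rw [hmkq, hφ0mk, hGb, hψmk, hFb]
  refine ⟨AlgEquiv.ofAlgHom φ0 ψ h1 h2, ?_, ?_, ?_⟩
  · intro i
    show ψ (Mz (ι K (Gen.e i))) = _
    rw [hψmk, hFe]
  · intro i
    show ψ (Mz (ι K (Gen.a i))) = _
    rw [hψmk, hFa]
    rfl
  · intro i
    show ψ (Mz (ι K (Gen.abar i))) = _
    rw [hψmk, hFb]
end
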